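/- arXiv:0909.3166 — 7 statements merged into one kernel-verified Lean document; each statement's English description precedes it below -/
import Mathlib

section
/- Let X be a topological space. Suppose that for every pair of continuous maps F₁, F₂ : D² → X × I and every ε > 0 there exist continuous maps F₁', F₂' : D² → X × I with disjoint images and d(Fᵢ, Fᵢ') < ε. Then for every pair of topographical map pairs (fᵢ, τᵢ) with fᵢ : D² → X and τᵢ : D² → I, and every ε > 0, there exist approximations (fᵢ', τᵢ') with d(fᵢ, fᵢ') < ε and d(τᵢ, τᵢ') < ε such that f₁'(τ₁'⁻¹(t)) ∩ f₂'(τ₂'⁻¹(t)) = ∅ for all t ∈ I. -/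
/-! Apply the disjoint disks property to `fᵢ × τᵢ` and split the approximations into their
coordinates: the slice of `f'` over the level `τ' = t` is the slice of `range F'` at height `t`,
so disjoint ranges give disjoint level images. The product metric is the max metric, so both
coordinates stay `ε`-close. -/

open Set Metric unitInterval

abbrev Disk2 : Set (EuclideanSpace ℝ (Fin 2)) := Metric.closedBall 0 1

section Slices

variable {α X Y : Type*}

theorem image_fst_preimage_snd_singleton (F : α → X × Y) (t : Y) :
    (fun z => (F z).1) '' ((fun z => (F z).2) ⁻¹' {t}) = (·, t) ⁻¹' range F := by
  ext x
  constructor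
  · rintro ⟨z, rfl, rfl⟩
    exact ⟨z, rfl⟩
  · rintro ⟨z, hz⟩
    exact ⟨z, congrArg Prod.snd hz, congrArg Prod.fst hz⟩

theorem image_fst_preimage_snd_inter_eq_empty {β : Type*} {F₁ : α → X × Y} {F₂ : β → X × Y}
    (h : Disjoint (range F₁) (range F₂)) (t : Y) :
    (fun z => (F₁ z).1) '' ((fun z => (F₁ z).2) ⁻¹' {t}) ∩
      (fun z => (F₂ z).1) '' ((fun z => (F₂ z).2) ⁻¹' {t}) = ∅ := by
  rw [image_fst_preimage_snd_singleton, image_fst_preimage_snd_singleton]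
  exact (h.preimage _).inter_eq

end Slices

section ProdDist

variable {X Y : Type*} [PseudoMetricSpace X] [PseudoMetricSpace Y]

theorem Prod.dist_fst_le_dist (p q : X × Y) : dist p.1 q.1 ≤ dist p q := le_max_left _ _

theorem Prod.dist_snd_le_dist (p q : X × Y) : dist p.2 q.2 ≤ dist p q := le_max_right _ _

end ProdDist

/-- if `X × I` has the disjoint disks (approximation) property, then `X` has
the disjoint topographies property. -/
theorem stmt_1 {X : Type*} [MetricSpace X]
    (hDD : ∀ F₁ F₂ : Disk2 → X × I, Continuous F₁ → Continuous F₂ → ∀ ε > (0 : ℝ),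
      ∃ F₁' F₂' : Disk2 → X × I, Continuous F₁' ∧ Continuous F₂' ∧
        Disjoint (range F₁') (range F₂') ∧
        (∀ z, dist (F₁ z) (F₁' z) < ε) ∧ (∀ z, dist (F₂ z) (F₂' z) < ε)) :
    ∀ (f₁ f₂ : Disk2 → X) (τ₁ τ₂ : Disk2 → I),
      Continuous f₁ → Continuous f₂ → Continuous τ₁ → Continuous τ₂ →
      ∀ ε > (0 : ℝ),
      ∃ (f₁' f₂' : Disk2 → X) (τ₁' τ₂' : Disk2 → I),
        Continuous f₁' ∧ Continuous f₂' ∧ Continuous τ₁' ∧ Continuous τ₂' ∧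
        (∀ z, dist (f₁ z) (f₁' z) < ε) ∧ (∀ z, dist (f₂ z) (f₂' z) < ε) ∧
        (∀ z, dist (τ₁ z) (τ₁' z) < ε) ∧ (∀ z, dist (τ₂ z) (τ₂' z) < ε) ∧
        ∀ t : I, f₁' '' (τ₁' ⁻¹' {t}) ∩ f₂' '' (τ₂' ⁻¹' {t}) = ∅ := by
  intro f₁ f₂ τ₁ τ₂ hf₁ hf₂ hτ₁ hτ₂ ε hε
  obtain ⟨F₁', F₂', hF₁', hF₂', hdisj, hd₁, hd₂⟩ :=
    hDD (fun z => (f₁ z, τ₁ z)) (fun z => (f₂ z, τ₂ z))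
      (hf₁.prodMk hτ₁) (hf₂.prodMk hτ₂) ε hε
  exact ⟨fun z => (F₁' z).1, fun z => (F₂' z).1, fun z => (F₁' z).2, fun z => (F₂' z).2,
    hF₁'.fst, hF₂'.fst, hF₁'.snd, hF₂'.snd,
    fun z => (Prod.dist_fst_le_dist _ _).trans_lt (hd₁ z),
    fun z => (Prod.dist_fst_le_dist _ _).trans_lt (hd₂ z),
    fun z => (Prod.dist_snd_le_dist _ _).trans_lt (hd₁ z),
    fun z => (Prod.dist_snd_le_dist _ _).trans_lt (hd₂ z),
    image_fst_preimage_snd_inter_eq_empty hdisj⟩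
end

section
/- Let X be a topological space with the disjoint topographies property. Then X × I has the disjoint disks property: any two continuous maps F₁, F₂ : D² → X × I can be approximated arbitrarily closely by maps with disjoint images. -/
open Set Metric unitInterval

theorem disjoint_range_prodMk_iff {α β X T : Type*} (f₁ : α → X) (τ₁ : α → T)
    (f₂ : β → X) (τ₂ : β → T) :
    Disjoint (range fun z => (f₁ z, τ₁ z)) (range fun z => (f₂ z, τ₂ z)) ↔
      ∀ t, f₁ '' (τ₁ ⁻¹' {t}) ∩ f₂ '' (τ₂ ⁻¹' {t}) = ∅ := by
  simp only [Set.disjoint_left, Set.eq_empty_iff_forall_notMem, mem_range, mem_inter_iff,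
    mem_image, mem_preimage, mem_singleton_iff, Prod.forall, Prod.mk.injEq, not_and,
    not_exists, forall_exists_index, and_imp]
  constructor
  · rintro h t x z₁ ht₁ hx₁ z₂ ht₂ hx₂
    exact h x t z₁ hx₁ ht₁ z₂ hx₂ ht₂
  · rintro h x t z₁ hx₁ ht₁ z₂ hx₂ ht₂
    exact h t x z₁ ht₁ hx₁ z₂ ht₂ hx₂

/-- if `X` has the disjoint topographies property, then `X × I` has the
disjoint disks (approximation) property. -/
theorem stmt_2 {X : Type*} [MetricSpace X]
    (hDTP : ∀ (f₁ f₂ : Disk2 → X) (τ₁ τ₂ : Disk2 → I),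
      Continuous f₁ → Continuous f₂ → Continuous τ₁ → Continuous τ₂ →
      ∀ ε > (0 : ℝ),
      ∃ (f₁' f₂' : Disk2 → X) (τ₁' τ₂' : Disk2 → I),
        Continuous f₁' ∧ Continuous f₂' ∧ Continuous τ₁' ∧ Continuous τ₂' ∧
        (∀ z, dist (f₁ z) (f₁' z) < ε) ∧ (∀ z, dist (f₂ z) (f₂' z) < ε) ∧
        (∀ z, dist (τ₁ z) (τ₁' z) < ε) ∧ (∀ z, dist (τ₂ z) (τ₂' z) < ε) ∧
        ∀ t : I, f₁' '' (τ₁' ⁻¹' {t}) ∩ f₂' '' (τ₂' ⁻¹' {t}) = ∅) :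
    ∀ F₁ F₂ : Disk2 → X × I, Continuous F₁ → Continuous F₂ → ∀ ε > (0 : ℝ),
      ∃ F₁' F₂' : Disk2 → X × I, Continuous F₁' ∧ Continuous F₂' ∧
        Disjoint (range F₁') (range F₂') ∧
        (∀ z, dist (F₁ z) (F₁' z) < ε) ∧ (∀ z, dist (F₂ z) (F₂' z) < ε) := by
  intro F₁ F₂ hF₁ hF₂ ε hε
  obtain ⟨f₁, f₂, τ₁, τ₂, hf₁, hf₂, hτ₁, hτ₂, hdf₁, hdf₂, hdτ₁, hdτ₂, hlevel⟩ :=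
    hDTP (Prod.fst ∘ F₁) (Prod.fst ∘ F₂) (Prod.snd ∘ F₁) (Prod.snd ∘ F₂)
      hF₁.fst hF₂.fst hF₁.snd hF₂.snd ε hε
  refine ⟨fun z => (f₁ z, τ₁ z), fun z => (f₂ z, τ₂ z), hf₁.prodMk hτ₁, hf₂.prodMk hτ₂,
    (disjoint_range_prodMk_iff f₁ τ₁ f₂ τ₂).2 hlevel, fun z => ?_, fun z => ?_⟩
  · rw [Prod.dist_eq]
    exact max_lt (hdf₁ z) (hdτ₁ z)
  · rw [Prod.dist_eq]
    exact max_lt (hdf₂ z) (hdτ₂ z)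
end

section
/- Let X be a metric ANR, Y a metric space, f : Y → X continuous, Z ⊂ Y compact, U an open set with Z ⊂ U ⊂ Y, and ε > 0. Then there exists δ > 0 such that for every continuous g_Z : Z → X with d(g_Z, f|_Z) < δ there is a homotopy H : Y × I → X with H₀ = f, H₁|_Z = g_Z, H_t = f on Y \ U for all t, and diam(H({y} × I)) < ε for all y ∈ Y. -/
/-!
Arguing by contradiction, take maps `g n : Z → X` with `d(g n, f) < 1/(n+1)` that admit no
such homotopy. On the closed set `A ⊆ Y × ℝ × ℝ` made of `{s = 0}`, `{t = 0}` and
`Z × {1} × {0, 1/(n+1) | n}`, the map equal to `g n` on `Z × {1} × {1/(n+1)}` and to `f y`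
elsewhere is continuous, because `g n → f` uniformly. The ANR property extends it to some `G` on
a neighbourhood `W` of `A`, and by compactness `W` contains a uniform neighbourhood of
`Z × [0,1] × {0}` on which `G` stays `ε/3`-close to `f` on `Z`. With a bump `u` equal to `1` on
`Z` and supported in a thin neighbourhood of `Z` inside `U`, `H (y, τ) = G (y, τ u y, 1/(n+1))`
is such a homotopy for `g n` once `n` is large. A whole sequence is used as parameter, rather
than the space `C(Z, X)`, because `IsANR.{u, v}` only extends maps from spaces in `Type v`.
-/

open Set Metric unitInterval

universe u v

/-- A metric space is an ANR iff it is an absolute neighborhood extensor for metric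
spaces. -/
def IsANR (X : Type u) [MetricSpace X] : Prop :=
  ∀ (Y : Type v) [MetricSpace Y] (A : Set Y), IsClosed A →
    ∀ f : A → X, Continuous f →
      ∃ (U : Set Y) (hAU : A ⊆ U), IsOpen U ∧
        ∃ g : U → X, Continuous g ∧ ∀ (a : Y) (ha : a ∈ A), g ⟨a, hAU ha⟩ = f ⟨a, ha⟩

open Filter Topology Function

theorem continuousOn_extend_subtype_val {α β : Type*} [TopologicalSpace α] [TopologicalSpace β]
    {s : Set α} {g : s → β} (hg : Continuous g) (f : α → β) :
    ContinuousOn (extend Subtype.val g f) s := by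
  rw [continuousOn_iff_continuous_domRestrict]
  convert hg
  exact funext fun x => Subtype.val_injective.extend_apply g f x

theorem IsANR.exists_continuousOn_extension {X : Type u} [MetricSpace X] (hX : IsANR.{u, v} X)
    {M : Type v} [MetricSpace M] {A : Set M} (hA : IsClosed A) {F : M → X}
    (hF : ContinuousOn F A) :
    ∃ W, IsOpen W ∧ A ⊆ W ∧ ∃ G : M → X, ContinuousOn G W ∧ EqOn G F A := by
  obtain ⟨W, hAW, hWo, g, hg, hgF⟩ :=
    hX M A hA (A.domRestrict F) (continuousOn_iff_continuous_domRestrict.1 hF)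
  refine ⟨W, hWo, hAW, extend Subtype.val g F, continuousOn_extend_subtype_val hg F,
    fun a ha => ?_⟩
  exact (Subtype.val_injective.extend_apply g F ⟨a, hAW ha⟩).trans (hgF a ha)

theorem IsCompact.exists_forall_dist_lt {M X : Type*} [PseudoMetricSpace M] [PseudoMetricSpace X]
    {K W : Set M} {G : M → X} (hK : IsCompact K) (hW : IsOpen W) (hKW : K ⊆ W)
    (hG : ContinuousOn G W) {η : ℝ} (hη : 0 < η) :
    ∃ r > 0, ∀ q ∈ K, ∀ p, dist p q < r → p ∈ W ∧ dist (G p) (G q) < η := by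
  obtain ⟨r₁, hr₁, hthick⟩ := hK.exists_thickening_subset_open hW hKW
  obtain ⟨r₂, hr₂, hunif⟩ := mem_uniformity_dist.1 <|
    hK.uniformContinuousAt_of_continuousAt G (fun q hq => hG.continuousAt (hW.mem_nhds (hKW hq)))
      (dist_mem_uniformity hη)
  refine ⟨min r₁ r₂, lt_min hr₁ hr₂, fun q hq p hpq => ⟨?_, ?_⟩⟩
  · exact hthick (mem_thickening_iff.2 ⟨q, hq, hpq.trans_le (min_le_left _ _)⟩)
  · rw [dist_comm]
    exact hunif (by rw [dist_comm]; exact hpq.trans_le (min_le_right _ _)) hq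

theorem exists_continuous_bump {Y : Type*} [MetricSpace Y] {Z : Set Y} (hZ : IsClosed Z)
    {ρ : ℝ} (hρ : 0 < ρ) :
    ∃ u : Y → ℝ, Continuous u ∧ (∀ y, u y ∈ Icc 0 1) ∧ (∀ z ∈ Z, u z = 1) ∧
      ∀ y ∉ thickening ρ Z, u y = 0 := by
  obtain ⟨u, hu0, hu1, hu⟩ := exists_continuous_zero_one_of_isClosed
    isOpen_thickening.isClosed_compl hZ
    (disjoint_compl_left_iff_subset.2 (self_subset_thickening hρ Z))
  exact ⟨u, u.continuous, hu, fun z hz => hu1 hz, fun y hy => hu0 hy⟩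

noncomputable def seqParam (n : ℕ) : ℝ := 1 / ((n : ℝ) + 1)

theorem seqParam_pos (n : ℕ) : 0 < seqParam n := Nat.one_div_pos_of_nat

theorem seqParam_injective : Injective seqParam := fun m n h => by
  simpa [seqParam] using h

theorem tendsto_seqParam : Tendsto seqParam atTop (𝓝 0) :=
  tendsto_one_div_add_atTop_nhds_zero_nat

theorem eventually_mem_range_seqParam_imp_eq (m : ℕ) :
    ∀ᶠ s in 𝓝 (seqParam m), s ∈ range seqParam → s = seqParam m := by
  have hinv : Tendsto (·⁻¹) (𝓝 (seqParam m)) (𝓝 ((m : ℝ) + 1)) := by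
    simpa [seqParam] using tendsto_inv₀ (seqParam_pos m).ne'
  filter_upwards [hinv (ball_mem_nhds _ one_pos)] with s hs
  rintro ⟨k, rfl⟩
  by_contra hkm
  have hlt : dist (k : ℝ) m < 1 := by
    simpa [seqParam, Real.dist_eq] using hs
  exact hlt.not_ge (Nat.pairwise_one_le_dist fun h => hkm (h ▸ rfl))

section Frame

variable {X Y : Type*}

/-- Coordinates `(y, t, s)`: `t` is the time of the homotopy and `s = seqParam n` selects the
`n`-th map of the sequence. -/
def frame (Z : Set Y) : Set (Y × ℝ × ℝ) :=
  univ ×ˢ univ ×ˢ {0} ∪ univ ×ˢ {0} ×ˢ univ ∪ Z ×ˢ {1} ×ˢ insert 0 (range seqParam)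

open Classical in
noncomputable def frameMap (f : Y → X) {Z : Set Y} (g : ℕ → Z → X) (p : Y × ℝ × ℝ) :
    X :=
  if p.2.1 = 1 ∧ p.2.2 ∈ range seqParam then
    extend Subtype.val (g (invFun seqParam p.2.2)) f p.1
  else f p.1

variable {f : Y → X} {Z : Set Y} {g : ℕ → Z → X}

theorem isClosed_frame [TopologicalSpace Y] (hZ : IsClosed Z) : IsClosed (frame Z) :=
  ((isClosed_univ.prod (isClosed_univ.prod isClosed_singleton)).union
    (isClosed_univ.prod (isClosed_singleton.prod isClosed_univ))).union
    (hZ.prod (isClosed_singleton.prod tendsto_seqParam.isCompact_insert_range.isClosed))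

theorem frameMap_of_ne_one {p : Y × ℝ × ℝ} (h : p.2.1 ≠ 1) : frameMap f g p = f p.1 :=
  if_neg fun h' => h h'.1

theorem frameMap_of_eq_zero {p : Y × ℝ × ℝ} (h : p.2.2 = 0) : frameMap f g p = f p.1 :=
  if_neg fun ⟨_, n, hn⟩ => (seqParam_pos n).ne' (hn.trans h)

theorem frameMap_seqParam (y : Y) (n : ℕ) :
    frameMap f g (y, 1, seqParam n) = extend Subtype.val (g n) f y := by
  simp [frameMap, leftInverse_invFun seqParam_injective n]

theorem dist_extend_le [PseudoMetricSpace X] {n : ℕ}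
    (hgd : ∀ z, dist (g n z) (f z) < seqParam n) (y : Y) :
    dist (extend Subtype.val (g n) f y) (f y) ≤ seqParam n := by
  by_cases hy : y ∈ Z
  · rw [show y = (⟨y, hy⟩ : Z) from rfl, Subtype.val_injective.extend_apply]
    exact (hgd _).le
  · rw [extend_apply' _ _ _ fun ⟨z, hz⟩ => hy (hz ▸ z.2), dist_self]
    exact (seqParam_pos n).le

theorem dist_frameMap_le [PseudoMetricSpace X] (hgd : ∀ n z, dist (g n z) (f z) < seqParam n)
    (p : Y × ℝ × ℝ) :
    dist (frameMap f g p) (f p.1) ≤ |p.2.2| := by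
  obtain ⟨y, t, s⟩ := p
  by_cases h : t = 1 ∧ s ∈ range seqParam
  · obtain ⟨rfl, n, rfl⟩ := h
    rw [frameMap_seqParam, abs_of_pos (seqParam_pos n)]
    exact dist_extend_le (hgd n) y
  · rw [frameMap, if_neg h, dist_self]
    exact abs_nonneg s

theorem continuousOn_frameMap [PseudoMetricSpace X] [TopologicalSpace Y] (hf : Continuous f)
    (hgc : ∀ n, Continuous (g n)) (hgd : ∀ n z, dist (g n z) (f z) < seqParam n) :
    ContinuousOn (frameMap f g) (frame Z) := by
  rintro ⟨y, t, s⟩ hp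
  by_cases hs : s = 0
  · -- the `g n` converge uniformly to `f` as `s = seqParam n → 0`
    subst hs
    refine ContinuousAt.continuousWithinAt ?_
    have hdist :
        Tendsto (fun q : Y × ℝ × ℝ => dist (f q.1) (frameMap f g q)) (𝓝 (y, t, 0))
          (𝓝 0) :=
      squeeze_zero (fun _ => dist_nonneg)
        (fun q => (dist_comm _ _).trans_le (dist_frameMap_le hgd q))
        ((continuous_abs.comp continuous_snd.snd).tendsto' _ 0 (by simp))
    rw [ContinuousAt, frameMap_of_eq_zero rfl]
    exact ((hf.comp continuous_fst).tendsto _).congr_dist hdist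
  by_cases ht : t = 1
  · subst ht
    obtain ⟨hy, m, rfl⟩ : y ∈ Z ∧ s ∈ range seqParam := by
      rcases hp with (⟨-, -, h⟩ | ⟨-, h, -⟩) | ⟨hy, -, h⟩
      exacts [absurd h hs, absurd h one_ne_zero, ⟨hy, h.resolve_left hs⟩]
    have hloc :
        ∀ᶠ q in 𝓝[frame Z] (y, 1, seqParam m), q.1 ∈ Z ∧ q = (q.1, 1, seqParam m) := by
      have ht0 : ∀ᶠ q in 𝓝 (y, (1 : ℝ), seqParam m), q.2.1 ≠ 0 :=
        continuous_snd.fst.continuousAt.eventually_ne one_ne_zero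
      have hs0 : ∀ᶠ q in 𝓝 (y, (1 : ℝ), seqParam m), q.2.2 ≠ 0 :=
        continuous_snd.snd.continuousAt.eventually_ne (seqParam_pos m).ne'
      have hiso := (continuous_snd.snd.tendsto (y, (1 : ℝ), seqParam m)).eventually
        (eventually_mem_range_seqParam_imp_eq m)
      filter_upwards [nhdsWithin_le_nhds (ht0.and (hs0.and hiso)), self_mem_nhdsWithin]
        with ⟨y', t', s'⟩ ⟨ht', hs', hiso'⟩ hq
      rcases hq with (⟨-, -, h⟩ | ⟨-, h, -⟩) | ⟨hy', rfl, h⟩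
      exacts [absurd h hs', absurd h ht',
        ⟨hy', by rw [show s' = seqParam m from hiso' (h.resolve_left hs')]⟩]
    have hcont : ContinuousWithinAt (extend Subtype.val (g m) f ∘ Prod.fst) (Prod.fst ⁻¹' Z)
        (y, (1 : ℝ), seqParam m) :=
      (continuousOn_extend_subtype_val (hgc m) f y hy).comp continuous_fst.continuousWithinAt
        (mapsTo_preimage _ _)
    refine (hcont.mono_of_mem_nhdsWithin (hloc.mono fun q hq => hq.1)).congr_of_eventuallyEq_of_mem
      (hloc.mono fun q hq => ?_) hp
    rw [hq.2, frameMap_seqParam]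
    rfl
  · refine ((hf.comp continuous_fst).continuousAt.congr ?_).continuousWithinAt
    filter_upwards [continuous_snd.fst.continuousAt.eventually_ne ht] with q hq
    exact (frameMap_of_ne_one hq).symm

end Frame

section Homotopy

variable {X Y : Type*} [PseudoMetricSpace X] [TopologicalSpace Y]

def IsControlledHomotopy (f : Y → X) {Z : Set Y} (U : Set Y) (ε : ℝ) (gZ : Z → X)
    (H : Y × I → X) : Prop :=
  Continuous H ∧ (∀ y : Y, H (y, 0) = f y) ∧ (∀ z : Z, H (z, 1) = gZ z) ∧
    (∀ y : Y, y ∉ U → ∀ t : I, H (y, t) = f y) ∧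
    (∀ y : Y, Metric.diam (H '' (({y} : Set Y) ×ˢ (univ : Set I))) < ε)

theorem isControlledHomotopy_comp_bump {f : Y → X} {Z U : Set Y} {ε : ℝ} (hε : 0 < ε)
    {gZ : Z → X} {G : Y × ℝ → X} {W : Set (Y × ℝ)} {u : Y → ℝ} (hG : ContinuousOn G W)
    (hu : Continuous u) (hu01 : ∀ y, u y ∈ Icc 0 1) (huZ : ∀ z ∈ Z, u z = 1)
    (huU : ∀ y ∉ U, u y = 0) (hW0 : ∀ y, (y, 0) ∈ W) (hG0 : ∀ y, G (y, 0) = f y)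
    (hG1 : ∀ z : Z, G (z, 1) = gZ z)
    (hnear : ∀ y, u y ≠ 0 →
      ∃ c, ∀ a ∈ Icc (0 : ℝ) 1, (y, a) ∈ W ∧ dist (G (y, a)) c < ε / 3) :
    IsControlledHomotopy f U ε gZ fun p => G (p.1, p.2 * u p.1) := by
  have htrack :
      ∀ y, ∃ c, ∀ τ : I, (y, τ * u y) ∈ W ∧ dist (G (y, τ * u y)) c ≤ ε / 3 := by
    intro y
    by_cases hy : u y = 0
    · exact ⟨f y, fun τ => by simp [hy, hW0, hG0]; positivity⟩
    · obtain ⟨c, hc⟩ := hnear y hy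
      refine ⟨c, fun τ => (hc _ ⟨mul_nonneg τ.2.1 (hu01 y).1, ?_⟩).imp_right le_of_lt⟩
      exact mul_le_one₀ τ.2.2 (hu01 y).1 (hu01 y).2
  choose c hc using htrack
  refine ⟨hG.comp_continuous (by fun_prop) fun p => (hc p.1 p.2).1, fun y => by simp [hG0],
    fun z => by simp [huZ z z.2, hG1], fun y hy t => by simp [huU y hy, hG0], fun y => ?_⟩
  calc diam _ ≤ 2 * (ε / 3) := diam_le_of_subset_closedBall (by positivity)
        (by rintro _ ⟨⟨y', τ⟩, ⟨rfl, -⟩, rfl⟩; exact (hc y' τ).2)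
    _ < ε := by linarith

end Homotopy

theorem exists_uniform_control_near_base {X Y : Type*} [PseudoMetricSpace X]
    [PseudoMetricSpace Y] {f : Y → X} {Z : Set Y} {W : Set (Y × ℝ × ℝ)}
    {G : Y × ℝ × ℝ → X}
    (hZ : IsCompact Z) (hW : IsOpen W) (hG : ContinuousOn G W)
    (hbase : ∀ z ∈ Z, ∀ a ∈ Icc (0 : ℝ) 1, (z, a, 0) ∈ W ∧ G (z, a, 0) = f z)
    {η : ℝ} (hη : 0 < η) :
    ∃ r > 0, ∀ z ∈ Z, ∀ y, dist y z < r → ∀ s, |s| < r → ∀ a ∈ Icc (0 : ℝ) 1,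
      (y, a, s) ∈ W ∧ dist (G (y, a, s)) (f z) < η := by
  obtain ⟨r, hr, hrW⟩ :=
    (hZ.prod (isCompact_Icc.prod isCompact_singleton)).exists_forall_dist_lt hW
      (by rintro ⟨z, a, s⟩ ⟨hz, ha, rfl⟩; exact (hbase z hz a ha).1) hG hη
  refine ⟨r, hr, fun z hz y hyz s hs a ha => ?_⟩
  have hdist : dist (y, a, s) (z, a, (0 : ℝ)) < r := by
    simpa [Prod.dist_eq, Real.dist_eq, hr] using max_lt hyz hs
  obtain ⟨hW', hclose⟩ := hrW (z, a, 0) ⟨hz, ha, rfl⟩ (y, a, s) hdist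
  rw [(hbase z hz a ha).2] at hclose
  exact ⟨hW', hclose⟩

theorem exists_isControlledHomotopy_of_dist_lt_seqParam {X : Type u} [MetricSpace X]
    (hX : IsANR.{u, v} X) {Y : Type v} [MetricSpace Y] {f : Y → X} (hf : Continuous f)
    {Z U : Set Y} (hZ : IsCompact Z) (hU : IsOpen U) (hZU : Z ⊆ U) {ε : ℝ} (hε : 0 < ε)
    {g : ℕ → Z → X} (hgc : ∀ n, Continuous (g n))
    (hgd : ∀ n z, dist (g n z) (f z) < seqParam n) :
    ∃ n H, IsControlledHomotopy f U ε (g n) H := by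
  obtain ⟨W, hWo, hAW, G, hGc, hGF⟩ := hX.exists_continuousOn_extension
    (isClosed_frame hZ.isClosed) (continuousOn_frameMap hf hgc hgd)
  have hG : ∀ p ∈ frame Z, p.2.1 ≠ 1 ∨ p.2.2 = 0 → G p = f p.1 := fun p hp h =>
    (hGF hp).trans (h.elim frameMap_of_ne_one frameMap_of_eq_zero)
  have hbase : ∀ y a, (y, a, (0 : ℝ)) ∈ frame Z :=
    fun _ _ => Or.inl (Or.inl ⟨trivial, trivial, rfl⟩)
  obtain ⟨r, hr, hctrl⟩ := exists_uniform_control_near_base hZ hWo hGc (η := ε / 3)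
    (fun z _ a _ => ⟨hAW (hbase z a), hG _ (hbase z a) (Or.inr rfl)⟩) (by positivity)
  obtain ⟨δ, hδ, hδU⟩ := hZ.exists_thickening_subset_open hU hZU
  obtain ⟨u, huc, hu01, huZ, hu0⟩ := exists_continuous_bump hZ.isClosed (lt_min hr hδ)
  obtain ⟨n, hn⟩ := exists_nat_one_div_lt hr
  have hbottom : ∀ y, (y, (0 : ℝ), seqParam n) ∈ frame Z :=
    fun y => Or.inl (Or.inr ⟨trivial, rfl, trivial⟩)
  refine ⟨n, _, isControlledHomotopy_comp_bump (G := fun q => G (q.1, q.2, seqParam n))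
    (W := {q | (q.1, q.2, seqParam n) ∈ W}) hε
    (hGc.comp (Continuous.continuousOn (by fun_prop)) fun _ hq => hq) huc hu01 huZ ?_
    (fun y => hAW (hbottom y)) (fun y => hG _ (hbottom y) (Or.inl zero_ne_one)) ?_ ?_⟩
  · exact fun y hy => hu0 y fun h => hy (hδU (thickening_mono (min_le_right _ _) Z h))
  · intro z
    have htop : ((z : Y), (1 : ℝ), seqParam n) ∈ frame Z :=
      Or.inr ⟨z.2, rfl, Or.inr ⟨n, rfl⟩⟩
    exact (hGF htop).trans
      ((frameMap_seqParam _ n).trans (Subtype.val_injective.extend_apply _ _ z))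
  · intro y hy
    obtain ⟨z, hz, hyz⟩ := mem_thickening_iff.1 (not_imp_comm.1 (hu0 y) hy)
    exact ⟨f z, hctrl z hz y (hyz.trans_le (min_le_left _ _)) _
      (by rwa [abs_of_pos (seqParam_pos n)])⟩

/-- the controlled Homotopy Extension Theorem (HET). -/
theorem stmt_8 {X : Type u} [MetricSpace X] (hX : IsANR.{u, v} X)
    {Y : Type v} [MetricSpace Y] (f : Y → X) (hf : Continuous f)
    (Z : Set Y) (hZ : IsCompact Z) (U : Set Y) (hU : IsOpen U) (hZU : Z ⊆ U)
    (ε : ℝ) (hε : 0 < ε) :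
    ∃ δ > (0 : ℝ), ∀ gZ : Z → X, Continuous gZ →
      (∀ z : Z, dist (gZ z) (f z) < δ) →
      ∃ H : Y × I → X, Continuous H ∧
        (∀ y : Y, H (y, 0) = f y) ∧
        (∀ z : Z, H (z, 1) = gZ z) ∧
        (∀ y : Y, y ∉ U → ∀ t : I, H (y, t) = f y) ∧
        (∀ y : Y, Metric.diam (H '' (({y} : Set Y) ×ˢ (univ : Set I))) < ε) := by
  suffices ∃ δ > (0 : ℝ), ∀ gZ : Z → X, Continuous gZ →
      (∀ z : Z, dist (gZ z) (f z) < δ) → ∃ H, IsControlledHomotopy f U ε gZ H from this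
  by_contra! hbad
  choose g hgc hgd hgH using fun n => hbad (seqParam n) (seqParam_pos n)
  obtain ⟨n, H, hH⟩ :=
    exists_isControlledHomotopy_of_dist_lt_seqParam hX hf hZ hU hZU hε hgc hgd
  exact hgH n H hH
end

section
/- Let X be a metric space and for i = 1,2 let (fᵢ, τᵢ) be topographical map pairs with fᵢ : Yᵢ × I → X, τᵢ : Yᵢ × I → I, where Yᵢ are compact metric spaces, such that the restrictions to the end levels Eᵢ = Yᵢ × {0,1} form disjoint topographical map pairs: f₁(τ₁⁻¹(t) ∩ E₁) ∩ f₂(τ₂⁻¹(t) ∩ E₂) = ∅ for all t. Then there exists ε > 0 such that any topographical map pairs (gᵢ, μᵢ) with d(gᵢ|_{Eᵢ}, fᵢ|_{Eᵢ}) < ε and d(μᵢ|_{Eᵢ}, τᵢ|_{Eᵢ}) < ε also restrict to disjoint topographical map pairs on the end levels. -/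
/-!
Pair each map with its height function: `(fᵢ, τᵢ)` sends the end levels into `X × I`, and
disjointness of all the `t`-levels says exactly that these two images are disjoint. Both
images are compact, so some `ε`-thickenings of them are still disjoint, and an `ε`-close
perturbation of a map pair has its image inside the `ε`-thickening of the original one.
-/

open Set Metric unitInterval

/-- The end levels `Y × {0,1}` of `Y × I`. -/
def endLevels (Y : Type*) : Set (Y × I) := (univ : Set Y) ×ˢ ({0, 1} : Set I)

lemma isCompact_endLevels (Y : Type*) [TopologicalSpace Y] [CompactSpace Y] :
    IsCompact (endLevels Y) :=
  isCompact_univ.prod ({0, 1} : Set I).toFinite.isCompact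

lemma image_inter_image_preimage_singleton_eq_empty_iff {α β X T : Type*}
    (g₁ : α → X) (μ₁ : α → T) (g₂ : β → X) (μ₂ : β → T) (s₁ : Set α) (s₂ : Set β) :
    (∀ t, g₁ '' (μ₁ ⁻¹' {t} ∩ s₁) ∩ g₂ '' (μ₂ ⁻¹' {t} ∩ s₂) = ∅) ↔
      Disjoint ((fun p ↦ (g₁ p, μ₁ p)) '' s₁) ((fun q ↦ (g₂ q, μ₂ q)) '' s₂) := by
  simp only [Set.disjoint_left, eq_empty_iff_forall_notMem, forall_mem_image]
  constructor
  · rintro h p hp ⟨q, hq, hpq⟩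
    obtain ⟨hx, ht⟩ := Prod.ext_iff.1 hpq
    exact h (μ₁ p) (g₁ p) ⟨⟨p, ⟨rfl, hp⟩, rfl⟩, ⟨q, ⟨ht, hq⟩, hx⟩⟩
  · rintro h t _ ⟨⟨p, ⟨rfl, hp⟩, rfl⟩, ⟨q, ⟨ht, hq⟩, hx⟩⟩
    exact h hp ⟨q, hq, Prod.ext hx ht⟩

lemma image_subset_thickening_image {α Z : Type*} [PseudoMetricSpace Z] {f g : α → Z}
    {s : Set α} {ε : ℝ} (h : ∀ p ∈ s, dist (g p) (f p) < ε) :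
    g '' s ⊆ thickening ε (f '' s) := by
  rintro _ ⟨p, hp, rfl⟩
  exact mem_thickening_iff.2 ⟨f p, mem_image_of_mem f hp, h p hp⟩

lemma Disjoint.exists_pos_disjoint_image_of_dist_lt {α β Z : Type*} [TopologicalSpace α]
    [TopologicalSpace β] [MetricSpace Z] {f₁ : α → Z} {f₂ : β → Z} {s₁ : Set α} {s₂ : Set β}
    (hs₁ : IsCompact s₁) (hs₂ : IsCompact s₂) (hf₁ : ContinuousOn f₁ s₁)
    (hf₂ : ContinuousOn f₂ s₂) (hdisj : Disjoint (f₁ '' s₁) (f₂ '' s₂)) :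
    ∃ ε > 0, ∀ (g₁ : α → Z) (g₂ : β → Z), (∀ p ∈ s₁, dist (g₁ p) (f₁ p) < ε) →
      (∀ q ∈ s₂, dist (g₂ q) (f₂ q) < ε) → Disjoint (g₁ '' s₁) (g₂ '' s₂) := by
  obtain ⟨ε, hε, hthick⟩ :=
    hdisj.exists_thickenings (hs₁.image_of_continuousOn hf₁)
      (hs₂.image_of_continuousOn hf₂).isClosed
  exact ⟨ε, hε, fun g₁ g₂ h₁ h₂ ↦
    hthick.mono (image_subset_thickening_image h₁) (image_subset_thickening_image h₂)⟩

lemma dist_prodMk_lt {X T : Type*} [PseudoMetricSpace X] [PseudoMetricSpace T] {x x' : X}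
    {t t' : T} {ε : ℝ} (hx : dist x x' < ε) (ht : dist t t' < ε) :
    dist (x, t) (x', t') < ε := by
  rw [Prod.dist_eq]
  exact max_lt hx ht

/-- disjointness of topographical map pairs on the end levels is stable
under sufficiently small perturbations. -/
theorem stmt_9 {X Y₁ Y₂ : Type*} [MetricSpace X]
    [MetricSpace Y₁] [CompactSpace Y₁] [MetricSpace Y₂] [CompactSpace Y₂]
    (f₁ : Y₁ × I → X) (τ₁ : Y₁ × I → I) (f₂ : Y₂ × I → X) (τ₂ : Y₂ × I → I)
    (hf₁ : Continuous f₁) (hτ₁ : Continuous τ₁) (hf₂ : Continuous f₂) (hτ₂ : Continuous τ₂)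
    (hdisj : ∀ t : I,
      f₁ '' (τ₁ ⁻¹' {t} ∩ endLevels Y₁) ∩ f₂ '' (τ₂ ⁻¹' {t} ∩ endLevels Y₂) = ∅) :
    ∃ ε > (0 : ℝ), ∀ (g₁ : Y₁ × I → X) (μ₁ : Y₁ × I → I) (g₂ : Y₂ × I → X) (μ₂ : Y₂ × I → I),
      Continuous g₁ → Continuous μ₁ → Continuous g₂ → Continuous μ₂ →
      (∀ p ∈ endLevels Y₁, dist (g₁ p) (f₁ p) < ε) →
      (∀ p ∈ endLevels Y₁, dist (μ₁ p) (τ₁ p) < ε) →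
      (∀ p ∈ endLevels Y₂, dist (g₂ p) (f₂ p) < ε) →
      (∀ p ∈ endLevels Y₂, dist (μ₂ p) (τ₂ p) < ε) →
      ∀ t : I,
        g₁ '' (μ₁ ⁻¹' {t} ∩ endLevels Y₁) ∩ g₂ '' (μ₂ ⁻¹' {t} ∩ endLevels Y₂) = ∅ := by
  rw [image_inter_image_preimage_singleton_eq_empty_iff] at hdisj
  obtain ⟨ε, hε, hstable⟩ := hdisj.exists_pos_disjoint_image_of_dist_lt
    (isCompact_endLevels Y₁) (isCompact_endLevels Y₂)
    (hf₁.prodMk hτ₁).continuousOn (hf₂.prodMk hτ₂).continuousOn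
  refine ⟨ε, hε, fun g₁ μ₁ g₂ μ₂ _ _ _ _ hg₁ hμ₁ hg₂ hμ₂ ↦ ?_⟩
  rw [image_inter_image_preimage_singleton_eq_empty_iff]
  exact hstable _ _ (fun p hp ↦ dist_prodMk_lt (hg₁ p hp) (hμ₁ p hp))
    (fun q hq ↦ dist_prodMk_lt (hg₂ q hq) (hμ₂ q hq))
end

section
/- Let X be a metric space and suppose (f₁, τ₁) and (f₂, τ₂) are topographical map pairs with fᵢ : Kᵢ × I → X such that (f₂, τ₂) is fractured over (f₁, τ₁) via disjoint closed balls B₁, …, B_m ⊂ K₂ × I with f₂⁻¹(im f₁) ⊂ ⋃ int(Bⱼ), and such that moreover f₁(K₁ × I) ∩ f₂(K₂ × {0,1} ∪ K₂⁽⁰⁾ × I) = ∅. For each j choose tⱼ ∈ I \ τ₁(f₁⁻¹(f₂(Bⱼ))). Then any continuous τ₂'' : K₂ × I → I with τ₂''(x,t) = t for t ∈ {0,1}, τ₂''(x,t) = t for x ∈ K₂⁽⁰⁾, and τ₂'' ≡ tⱼ on Bⱼ, makes (f₁, τ₁) and (f₂, τ₂'') disjoint topographical map pairs: f₁(τ₁⁻¹(t))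 ∩ f₂(τ₂''⁻¹(t)) = ∅ for all t ∈ I. -/
open Set Metric unitInterval

/-- the core of the fuzzy-ribbons argument.  If `(f₂, τ₂)` is fractured over
`(f₁, τ₁)` via disjoint balls `B j`, and a new level map `τ₂''` is constant `t j` on each
`B j` (with `t j` avoiding `τ₁ (f₁⁻¹ (f₂ (B j)))`) and standard on the end levels and on
the 0-skeleton, then `(f₁, τ₁)` and `(f₂, τ₂'')` are disjoint topographical map pairs. -/
theorem stmt_11 {X K₁ K₂ : Type*} [MetricSpace X]
    [TopologicalSpace K₁] [TopologicalSpace K₂]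
    (K₂₀ : Set K₂)  -- the 0-skeleton of K₂
    (f₁ : K₁ × I → X) (τ₁ : K₁ × I → I) (f₂ : K₂ × I → X) (τ₂ : K₂ × I → I)
    (hf₁ : Continuous f₁) (hτ₁ : Continuous τ₁) (hf₂ : Continuous f₂) (hτ₂ : Continuous τ₂)
    (m : ℕ) (B : Fin m → Set (K₂ × I))
    (hBcl : ∀ j, IsClosed (B j))
    (hBdisj : ∀ j k, j ≠ k → Disjoint (B j) (B k))
    (hfrac : f₂ ⁻¹' (range f₁) ⊆ ⋃ j, interior (B j))
    (hfracI : ∀ j, τ₁ '' (f₁ ⁻¹' (f₂ '' B j)) ≠ (univ : Set I))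
    (hend : range f₁ ∩
      f₂ '' (((univ : Set K₂) ×ˢ ({0, 1} : Set I)) ∪ (K₂₀ ×ˢ (univ : Set I))) = ∅)
    (t : Fin m → I) (ht : ∀ j, t j ∉ τ₁ '' (f₁ ⁻¹' (f₂ '' B j)))
    (τ₂'' : K₂ × I → I) (hτ₂'' : Continuous τ₂'')
    (hτend : ∀ (x : K₂) (e : I), e = 0 ∨ e = 1 → τ₂'' (x, e) = e)
    (hτskel : ∀ x ∈ K₂₀, ∀ s : I, τ₂'' (x, s) = s)
    (hτB : ∀ j, ∀ p ∈ B j, τ₂'' p = t j) :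
    ∀ s : I, f₁ '' (τ₁ ⁻¹' {s}) ∩ f₂ '' (τ₂'' ⁻¹' {s}) = ∅ := by
  intro s
  ext y
  simp only [mem_inter_iff, mem_empty_iff_false, iff_false]
  rintro ⟨⟨a, ha, rfl⟩, p, hp, hfp⟩
  have hpr : f₂ p ∈ range f₁ := ⟨a, hfp.symm⟩
  obtain ⟨j, hj⟩ := mem_iUnion.1 (hfrac hpr)
  have hpB : p ∈ B j := interior_subset hj
  have hts : t j = s := by rw [← hτB j p hpB]; exact hp
  exact ht j ⟨a, ⟨p, hpB, hfp⟩, by rw [hts]; exact ha⟩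
end

section
/- Let X be a metric space with the disjoint arcs property restricted via one of the DTP* conditions: suppose X has the 𝒟_c × 𝒟 DTP*, i.e. for any pairs (fᵢ, τᵢ) with f₁ : D × I → X a constant homotopy with its natural level map, and f₂ : D × I → X arbitrary with τ₂ : D × I → I satisfying the 𝒵-category condition, and any ε > 0, there are topographical map pairs (fᵢ', τᵢ') in the respective categories with d(fᵢ, fᵢ') < ε that are disjoint. Then X has the disjoint arcs property: any two paths α, β : I → X can be approximated arbitrarily closely by paths with disjoint images. -/
open Set Metric unitInterval

/-!
Apply the DTP* hypothesis to the constant homotopy `(s, t) ↦ α s` and to `(z, t) ↦ β t` with the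
projection as level map. A constant homotopy whose level map is the projection has the same image,
the range of its bottom slice, on every level; since every point of `f₂'` lies on some level, that
range misses all of `f₂'`, in particular its side `t ↦ f₂' (0, t)`, which approximates `β`.
-/

section Levels

variable {Z X : Type*}

theorem image_level_eq_range_of_const {f : Z × I → X} (hf : ∀ z t, f (z, t) = f (z, 0))
    {τ : Z × I → I} (hτ : ∀ p, τ p = p.2) (t : I) :
    f '' (τ ⁻¹' {t}) = range fun z => f (z, 0) := by
  ext x
  constructor
  · rintro ⟨⟨z, s⟩, -, rfl⟩
    exact ⟨z, (hf z s).symm⟩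
  · rintro ⟨z, rfl⟩
    exact ⟨(z, t), by simp [hτ], hf z t⟩

theorem disjoint_range_of_levels_disjoint {f₁ f₂ : Z × I → X} {τ₁ τ₂ : Z × I → I}
    (hf₁ : ∀ z t, f₁ (z, t) = f₁ (z, 0)) (hτ₁ : ∀ p, τ₁ p = p.2)
    (hdisj : ∀ t, f₁ '' (τ₁ ⁻¹' {t}) ∩ f₂ '' (τ₂ ⁻¹' {t}) = ∅) :
    Disjoint (range fun z => f₁ (z, 0)) (range f₂) := by
  rw [disjoint_left]
  rintro x hx ⟨p, rfl⟩
  have hlevel := hdisj (τ₂ p)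
  rw [image_level_eq_range_of_const hf₁ hτ₁] at hlevel
  exact hlevel.subset ⟨hx, p, rfl, rfl⟩

end Levels

/-- the `𝒟_c × 𝒟` DTP* condition implies the disjoint arcs property. -/
theorem stmt_15 {X : Type*} [MetricSpace X]
    (hDTP : ∀ (f₁ : I × I → X), Continuous f₁ → (∀ z t : I, f₁ (z, t) = f₁ (z, 0)) →
      ∀ (f₂ : I × I → X) (τ₂ : I × I → I), Continuous f₂ → Continuous τ₂ →
      (∀ (z : I) (e : I), e = 0 ∨ e = 1 → τ₂ (z, e) = e) →
      ∀ ε > (0 : ℝ),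
      ∃ (f₁' f₂' : I × I → X) (τ₁' τ₂' : I × I → I),
        Continuous f₁' ∧ Continuous f₂' ∧ Continuous τ₁' ∧ Continuous τ₂' ∧
        -- `(f₁', τ₁')` lies in the category `𝒟_c`:
        (∀ z t : I, f₁' (z, t) = f₁' (z, 0)) ∧ (∀ p : I × I, τ₁' p = p.2) ∧
        -- `(f₂', τ₂')` lies in the category `𝒟`:
        (∀ (z : I) (e : I), e = 0 ∨ e = 1 → τ₂' (z, e) = e) ∧
        (∀ p, dist (f₁ p) (f₁' p) < ε) ∧ (∀ p, dist (f₂ p) (f₂' p) < ε) ∧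
        -- disjoint topographical map pairs:
        ∀ t : I, f₁' '' (τ₁' ⁻¹' {t}) ∩ f₂' '' (τ₂' ⁻¹' {t}) = ∅) :
    ∀ (α β : I → X), Continuous α → Continuous β → ∀ ε > (0 : ℝ),
      ∃ α' β' : I → X, Continuous α' ∧ Continuous β' ∧
        (∀ s, dist (α s) (α' s) < ε) ∧ (∀ s, dist (β s) (β' s) < ε) ∧
        Disjoint (range α') (range β') := by
  intro α β hα hβ ε hε
  obtain ⟨f₁', f₂', τ₁', τ₂', hc₁, hc₂, -, -, hconst, hτ₁, -, hd₁, hd₂, hdisj⟩ :=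
    hDTP (fun p => α p.1) (hα.comp continuous_fst) (fun _ _ => rfl)
      (fun p => β p.2) Prod.snd (hβ.comp continuous_snd) continuous_snd (fun _ _ _ => rfl) ε hε
  refine ⟨fun s => f₁' (s, 0), fun t => f₂' (0, t), hc₁.comp (.prodMk_left 0),
    hc₂.comp (.prodMk_right 0), fun s => hd₁ (s, 0), fun t => hd₂ (0, t), ?_⟩
  exact (disjoint_range_of_levels_disjoint hconst hτ₁ hdisj).mono_right
    (range_comp_subset_range _ f₂')
end

section
/- There exists a countable family of continuous maps γ_k : I → I with γ_k(0) = 0 and γ_k(1) = 1 such that the complement of ⋃_k graph-images {(γ_k(t), t) : t ∈ I} in the open square (0,1) × (0,1) is 0-dimensional. -/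
/-!
We take, for rationals `s < u` in `I`, the ramp rising linearly from `0` to
`1` on `[s, u]` and, for rational `q ∈ I`, a path that stays at `q` on `[s, u]`. The plateaus
cover every rational vertical line `{q} × (0, 1)`, so a connected part of the complement lies
on a single vertical line `{c} × (0, 1)`; the ramps cross that line at heights dense in
`(0, 1)`, so the part is a single point.
-/

open Set unitInterval

section LinearOrder

variable {α β : Type*} [LinearOrder α] [TopologicalSpace α] [OrderClosedTopology α]
  [LinearOrder β] [TopologicalSpace β] [OrderClosedTopology β]

theorem IsPreconnected.subsingleton_of_forall_exists_notMem {s : Set α} (hs : IsPreconnected s)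
    (h : ∀ a b, a < b → ∃ x ∈ Ioo a b, x ∉ s) : s.Subsingleton := by
  have key : ∀ a ∈ s, ∀ b ∈ s, ¬ a < b := fun a ha b hb hab ↦
    let ⟨x, hx, hxs⟩ := h a b hab
    hxs (hs.Icc_subset ha hb (Ioo_subset_Icc_self hx))
  exact fun a ha b hb ↦ le_antisymm (not_lt.1 (key b hb a ha)) (not_lt.1 (key a ha b hb))

theorem isTotallyDisconnected_of_forall_exists_notMem_prod {S : Set (α × β)}
    (hfst : ∀ a b, a < b → ∃ x ∈ Ioo a b, ∀ y, (x, y) ∉ S)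
    (hsnd : ∀ x, ∀ a b, a < b → ∃ y ∈ Ioo a b, (x, y) ∉ S) : IsTotallyDisconnected S := by
  intro T hTS hT
  have hT₁ : (Prod.fst '' T).Subsingleton :=
    (hT.image _ continuous_fst.continuousOn).subsingleton_of_forall_exists_notMem fun a b hab ↦ by
      obtain ⟨x, hx, hxS⟩ := hfst a b hab
      refine ⟨x, hx, ?_⟩
      rintro ⟨⟨x, y⟩, hp, rfl⟩
      exact hxS y (hTS hp)
  intro p hp q hq
  have hT₂ : (Prod.snd '' T).Subsingleton :=
    (hT.image _ continuous_snd.continuousOn).subsingleton_of_forall_exists_notMem fun a b hab ↦ by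
      obtain ⟨y, hy, hyS⟩ := hsnd p.1 a b hab
      refine ⟨y, hy, ?_⟩
      rintro ⟨⟨x, y⟩, hr, rfl⟩
      obtain rfl : p.1 = x := hT₁ (mem_image_of_mem _ hp) (mem_image_of_mem _ hr)
      exact hyS (hTS hr)
  exact Prod.ext (hT₁ (mem_image_of_mem _ hp) (mem_image_of_mem _ hq))
    (hT₂ (mem_image_of_mem _ hp) (mem_image_of_mem _ hq))

end LinearOrder

namespace unitInterval

noncomputable def ramp (s u : ℝ) (t : I) : I := projIcc 0 1 zero_le_one ((t - s) / (u - s))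

noncomputable def plateau (q : I) (s u : ℝ) (t : I) : I := min q (ramp 0 s t) ⊔ ramp u 1 t

variable {s u : ℝ} {t : I}

@[fun_prop]
theorem continuous_ramp : Continuous (ramp s u) :=
  continuous_projIcc.comp (by fun_prop)

@[fun_prop]
theorem continuous_plateau (q : I) : Continuous (plateau q s u) := by
  unfold plateau
  fun_prop

theorem ramp_eq_zero (hsu : s < u) (ht : (t : ℝ) ≤ s) : ramp s u t = 0 :=
  projIcc_of_le_left _ (div_nonpos_of_nonpos_of_nonneg (by linarith) (by linarith))

theorem ramp_eq_one (hsu : s < u) (ht : u ≤ (t : ℝ)) : ramp s u t = 1 :=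
  projIcc_of_right_le _ ((one_le_div₀ (by linarith)).2 (by linarith))

theorem ramp_eq_of_coe_eq (hsu : s < u) (c : I) (ht : (t : ℝ) = s + c * (u - s)) :
    ramp s u t = c := by
  have hval : ((t : ℝ) - s) / (u - s) = c := by
    rw [ht, add_sub_cancel_left, mul_div_cancel_right₀ _ (sub_ne_zero.2 hsu.ne')]
  rw [ramp, hval, projIcc_val]

theorem plateau_eq (q : I) (hs : 0 < s) (hu : u < 1) (hst : s ≤ (t : ℝ)) (htu : (t : ℝ) ≤ u) :
    plateau q s u t = q := by
  rw [plateau, ramp_eq_one hs hst, ramp_eq_zero hu htu, min_eq_left le_one', max_eq_left nonneg']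

-- Intersecting with the paths from `0` to `1` discards the parameters for which the formulas
-- are junk.
def rationalRampsAndPlateaus : Set (I → I) :=
  {γ | Continuous γ ∧ γ 0 = 0 ∧ γ 1 = 1} ∩
    (range (fun p : ℚ × ℚ ↦ ramp p.1 p.2) ∪
      range (fun p : ℚ × ℚ × ℚ ↦ plateau (projIcc 0 1 zero_le_one p.1) p.2.1 p.2.2))

theorem countable_rationalRampsAndPlateaus : rationalRampsAndPlateaus.Countable :=
  ((countable_range _).union (countable_range _)).mono inter_subset_right

theorem ramp_mem_rationalRampsAndPlateaus {s u : ℚ} (hs : 0 ≤ (s : ℝ)) (hsu : (s : ℝ) < u)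
    (hu : (u : ℝ) ≤ 1) : ramp s u ∈ rationalRampsAndPlateaus :=
  ⟨⟨continuous_ramp, ramp_eq_zero hsu hs, ramp_eq_one hsu hu⟩,
    Or.inl ⟨(s, u), rfl⟩⟩

theorem plateau_mem_rationalRampsAndPlateaus {q s u : ℚ} (hq : (q : ℝ) ∈ I) (hs : 0 < (s : ℝ))
    (hsu : (s : ℝ) < u) (hu : (u : ℝ) < 1) :
    plateau ⟨q, hq⟩ s u ∈ rationalRampsAndPlateaus := by
  refine ⟨⟨continuous_plateau _, ?_, ?_⟩, Or.inr ⟨(q, s, u), by simp [projIcc_of_mem _ hq]⟩⟩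
  · rw [plateau, ramp_eq_zero hs le_rfl, ramp_eq_zero hu (by simpa using (hs.trans hsu).le)]
    simp
  · rw [plateau, ramp_eq_one hu (by simp)]
    exact max_eq_right le_one'

theorem exists_mem_rationalRampsAndPlateaus_apply_eq_rat {q : ℚ} (hq : (q : ℝ) ∈ I) {t : I}
    (ht : (t : ℝ) ∈ Ioo 0 1) : ∃ γ ∈ rationalRampsAndPlateaus, γ t = ⟨q, hq⟩ := by
  obtain ⟨s, hs₀, hst⟩ := exists_rat_btwn ht.1
  obtain ⟨u, htu, hu₁⟩ := exists_rat_btwn ht.2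
  exact ⟨_, plateau_mem_rationalRampsAndPlateaus _ hs₀ (hst.trans htu) hu₁,
    plateau_eq _ hs₀ hu₁ hst.le htu.le⟩

theorem exists_mem_rationalRampsAndPlateaus_apply_eq (c : I) {a b : I} (hab : a < b) :
    ∃ γ ∈ rationalRampsAndPlateaus, ∃ t ∈ Ioo a b, γ t = c := by
  obtain ⟨s, has, hsb⟩ := exists_rat_btwn (Subtype.coe_lt_coe.2 hab)
  obtain ⟨u, hsu, hub⟩ := exists_rat_btwn hsb
  have hs₀ : 0 ≤ (s : ℝ) := a.2.1.trans has.le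
  have hu₁ : (u : ℝ) ≤ 1 := hub.le.trans b.2.2
  have hcs : 0 ≤ (c : ℝ) * (u - s) := mul_nonneg c.2.1 (sub_nonneg.2 hsu.le)
  have hcu : (c : ℝ) * (u - s) ≤ u - s := mul_le_of_le_one_left (sub_nonneg.2 hsu.le) c.2.2
  refine ⟨ramp s u, ramp_mem_rationalRampsAndPlateaus hs₀ hsu hu₁,
    ⟨s + c * (u - s), by linarith, by linarith⟩,
    ⟨show (a : ℝ) < _ by linarith, show _ < (b : ℝ) by linarith⟩,
    ramp_eq_of_coe_eq hsu c rfl⟩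

end unitInterval

/-- there is a countable family of paths `γ_k : I → I` from `0` to `1` whose
graph-images `{(γ_k t, t)}` fill the open square up to a `0`-dimensional complement. -/
theorem stmt_17 :
    ∃ γ : ℕ → I → I, (∀ k, Continuous (γ k)) ∧ (∀ k, γ k 0 = 0) ∧ (∀ k, γ k 1 = 1) ∧
      IsTotallyDisconnected
        ({p : I × I | (p.1 : ℝ) ∈ Ioo (0 : ℝ) 1 ∧ (p.2 : ℝ) ∈ Ioo (0 : ℝ) 1} \
          ⋃ k, {p : I × I | ∃ t : I, p = (γ k t, t)}) := by
  obtain ⟨γ, hγ⟩ := countable_rationalRampsAndPlateaus.exists_eq_range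
    ⟨_, ramp_mem_rationalRampsAndPlateaus (s := 0) (u := 1) (by simp) (by simp) (by simp)⟩
  have hγmem : ∀ k, γ k ∈ rationalRampsAndPlateaus := fun k ↦ hγ ▸ mem_range_self k
  have hgraph : ∀ g ∈ rationalRampsAndPlateaus, ∀ t : I,
      (g t, t) ∈ ⋃ k, {p : I × I | ∃ t : I, p = (γ k t, t)} := by
    intro g hg t
    obtain ⟨k, rfl⟩ := hγ ▸ hg
    exact mem_iUnion.2 ⟨k, t, rfl⟩
  refine ⟨γ, fun k ↦ (hγmem k).1.1, fun k ↦ (hγmem k).1.2.1, fun k ↦ (hγmem k).1.2.2,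
    isTotallyDisconnected_of_forall_exists_notMem_prod ?_ ?_⟩
  · intro a b hab
    obtain ⟨q, haq, hqb⟩ := exists_rat_btwn (Subtype.coe_lt_coe.2 hab)
    refine ⟨⟨q, a.2.1.trans haq.le, hqb.le.trans b.2.2⟩, ⟨haq, hqb⟩, ?_⟩
    rintro t ⟨⟨-, ht⟩, hnot⟩
    obtain ⟨g, hg, hgt⟩ := exists_mem_rationalRampsAndPlateaus_apply_eq_rat _ ht
    exact hnot (hgt ▸ hgraph g hg t)
  · intro c a b hab
    obtain ⟨g, hg, t, ht, hgt⟩ := exists_mem_rationalRampsAndPlateaus_apply_eq c hab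
    exact ⟨t, ht, fun h ↦ h.2 (hgt ▸ hgraph g hg t)⟩
end
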